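/- arXiv:1801.08852 — 2 statements merged into one kernel-verified Lean document; each statement's English description precedes it below -/
import Mathlib

section
/- Let n ≥ 1, μ, m ∈ ℝ^n, let Σ ∈ ℝ^{n×n} be a symmetric positive semidefinite matrix, and let ρ be a Borel measure on [0,∞)^n \ {0} satisfying ∫ min(‖t‖,1) ρ(dt) < ∞. Define Ψ(θ) = ∫ (exp(i⟨θ, t⋄μ⟩ − ½‖θ‖²_{t⋄Σ}) − 1) ρ(dt) and Ψ*(θ) = ∫ (exp(−½‖θ‖²_{t⋄Σ}) − 1) ρ(dt) for θ ∈ ℝ^n. Fix s ≥ 0 and p > 0. If the function θ ↦ exp(s Ψ*(θ)) belongs to L^p(ℝ^n) (with respect to Lebesgue measure), then the function θ ↦ exp(i s ⟨θ, m⟩ + s Ψ(θ)) also belongs to L^p(ℝ^n), i.e. θ ↦ |exp(i s ⟨θ, m⟩ + s Ψ(θ))|^p is Lebesgue integrable. -/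
open MeasureTheory Complex

noncomputable section

/-- Euclidean inner product on `ℝ^n`. -/
def dot {n : ℕ} (x y : Fin n → ℝ) : ℝ := ∑ k, x k * y k

/-- Quadratic form `‖θ‖²_A = θ A θᵀ`. -/
def quad {n : ℕ} (A : Matrix (Fin n) (Fin n) ℝ) (θ : Fin n → ℝ) : ℝ :=
  ∑ k, ∑ l, θ k * A k l * θ l

/-- Outer product `t ⋄ μ` of vectors, `(t ⋄ μ)_k = t_k μ_k`. -/
def diaV {n : ℕ} (t μ : Fin n → ℝ) : Fin n → ℝ := fun k => t k * μ k

/-- Outer product `t ⋄ Σ`, `(t ⋄ Σ)_{kl} = Σ_{kl} min(t_k, t_l)`. -/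
def diaM {n : ℕ} (t : Fin n → ℝ) (A : Matrix (Fin n) (Fin n) ℝ) :
    Matrix (Fin n) (Fin n) ℝ := Matrix.of fun k l => A k l * min (t k) (t l)

/-- Lévy exponent `Ψ` of the weak subordination `B ⊙ T`, `B ~ BM^n(μ,Σ)`. -/
def Ψws {n : ℕ} (μ : Fin n → ℝ) (S : Matrix (Fin n) (Fin n) ℝ)
    (ρ : Measure (Fin n → ℝ)) (θ : Fin n → ℝ) : ℂ :=
  ∫ t, (Complex.exp (Complex.I * (dot θ (diaV t μ) : ℂ) -
      (quad (diaM t S) θ : ℂ) / 2) - 1) ∂ρ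

/-- Lévy exponent `Ψ*` of `B* ⊙ T`, `B* ~ BM^n(0,Σ)`. -/
def Ψstar {n : ℕ} (S : Matrix (Fin n) (Fin n) ℝ)
    (ρ : Measure (Fin n → ℝ)) (θ : Fin n → ℝ) : ℝ :=
  ∫ t, (Real.exp (-(quad (diaM t S) θ) / 2) - 1) ∂ρ

/-!
Since `‖exp(i s⟨θ,m⟩ + sΨ(θ))‖ = exp(s Re Ψ(θ))`, it suffices that `Re Ψ ≤ Ψ*`, which holds
pointwise under the integral: the real part of the integrand of `Ψ` is
`exp(-‖θ‖²_{t⋄Σ}/2) cos⟨θ, t⋄μ⟩ - 1`, the integrand of `Ψ*` is the same with `cos` replaced by `1`.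
To compare the integrals we need integrability, and for measurability of the target we need
continuity of `Ψ`; both come from a bound `C min(‖t‖, 1)` on the integrand, locally uniform in `θ`.
That bound uses `‖θ‖²_{t⋄Σ} ≥ 0`, which holds because `min(a, b) = ∫₀^∞ 1{u < a} 1{u < b} du`
writes `‖θ‖²_{t⋄Σ}` as an integral of `Σ`-quadratic forms.
-/

open Set Matrix

lemma quad_eq_dotProduct_mulVec {n : ℕ} (A : Matrix (Fin n) (Fin n) ℝ) (θ : Fin n → ℝ) :
    quad A θ = θ ⬝ᵥ A *ᵥ θ := by
  simp [quad, dotProduct, mulVec, Finset.mul_sum, mul_assoc]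

lemma quad_nonneg_of_posSemidef {n : ℕ} {A : Matrix (Fin n) (Fin n) ℝ} (hA : A.PosSemidef)
    (θ : Fin n → ℝ) : 0 ≤ quad A θ := by
  simpa [quad_eq_dotProduct_mulVec] using hA.dotProduct_mulVec_nonneg θ

lemma setIntegral_Ioc_indicator_Iio_one {a M : ℝ} (ha : 0 ≤ a) (haM : a ≤ M) :
    ∫ u in Ioc 0 M, (Iio a).indicator 1 u = a := by
  rw [integral_indicator_one measurableSet_Iio, measureReal_restrict_apply measurableSet_Iio,
    show Iio a ∩ Ioc 0 M = Ioo 0 a by grind, Real.volume_real_Ioo_of_le ha, sub_zero]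

lemma quad_diaM_nonneg {n : ℕ} {S : Matrix (Fin n) (Fin n) ℝ} (hS : S.PosSemidef)
    {t : Fin n → ℝ} (ht : ∀ k, 0 ≤ t k) (θ : Fin n → ℝ) : 0 ≤ quad (diaM t S) θ := by
  let v : ℝ → Fin n → ℝ := fun u k => if u < t k then θ k else 0
  have hv : ∀ u k l, v u k * S k l * v u l =
      θ k * S k l * θ l * (Iio (min (t k) (t l))).indicator 1 u := by
    intro u k l
    by_cases hk : u < t k <;> by_cases hl : u < t l <;> simp [v, hk, hl]
  have hint : ∀ k l, Integrable (fun u => v u k * S k l * v u l)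
      (volume.restrict (Ioc (0 : ℝ) ‖t‖)) := fun k l => by
    simp_rw [hv]
    exact ((integrableOn_const (C := (1 : ℝ)) measure_Ioc_lt_top.ne).indicator
      measurableSet_Iio).const_mul _
  have hquad : quad (diaM t S) θ = ∫ u in Ioc 0 ‖t‖, quad S (v u) := by
    simp only [quad]
    rw [integral_finsetSum _ fun k _ => integrable_finsetSum _ fun l _ => hint k l]
    refine Finset.sum_congr rfl fun k _ => ?_
    rw [integral_finsetSum _ fun l _ => hint k l]
    refine Finset.sum_congr rfl fun l _ => ?_
    have htk : t k ≤ ‖t‖ := (le_abs_self _).trans (norm_le_pi_norm t k)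
    simp_rw [hv, integral_const_mul, setIntegral_Ioc_indicator_Iio_one
      (le_min (ht k) (ht l)) ((min_le_left _ _).trans htk)]
    simp only [diaM, Matrix.of_apply]
    ring
  rw [hquad]
  exact integral_nonneg fun u => quad_nonneg_of_posSemidef hS (v u)

lemma abs_dot_diaV_le {n : ℕ} (θ t μ : Fin n → ℝ) :
    |dot θ (diaV t μ)| ≤ (∑ k, |μ k|) * ‖θ‖ * ‖t‖ := by
  have hθ : ∀ k, |θ k| ≤ ‖θ‖ := fun k => norm_le_pi_norm θ k
  have ht : ∀ k, |t k| ≤ ‖t‖ := fun k => norm_le_pi_norm t k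
  calc |∑ k, θ k * (t k * μ k)| ≤ ∑ k, |θ k * (t k * μ k)| := Finset.abs_sum_le_sum_abs _ _
    _ ≤ ∑ k, |μ k| * ‖θ‖ * ‖t‖ := by
        gcongr with k
        rw [abs_mul, abs_mul]
        calc |θ k| * (|t k| * |μ k|) ≤ ‖θ‖ * (‖t‖ * |μ k|) := by gcongr <;> simp only [hθ, ht]
          _ = |μ k| * ‖θ‖ * ‖t‖ := by ring
    _ = (∑ k, |μ k|) * ‖θ‖ * ‖t‖ := by rw [Finset.sum_mul, Finset.sum_mul]

lemma abs_quad_diaM_le {n : ℕ} (θ t : Fin n → ℝ) (S : Matrix (Fin n) (Fin n) ℝ) :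
    |quad (diaM t S) θ| ≤ (∑ k, ∑ l, |S k l|) * ‖θ‖ ^ 2 * ‖t‖ := by
  have hθ : ∀ k, |θ k| ≤ ‖θ‖ := fun k => norm_le_pi_norm θ k
  have hmin : ∀ k l, |min (t k) (t l)| ≤ ‖t‖ := fun k l =>
    (abs_min_le_max_abs_abs).trans (max_le (norm_le_pi_norm t k) (norm_le_pi_norm t l))
  calc |∑ k, ∑ l, θ k * (S k l * min (t k) (t l)) * θ l|
      ≤ ∑ k, ∑ l, |θ k * (S k l * min (t k) (t l)) * θ l| :=
        (Finset.abs_sum_le_sum_abs _ _).trans (by gcongr; exact Finset.abs_sum_le_sum_abs _ _)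
    _ ≤ ∑ k, ∑ l, |S k l| * ‖θ‖ ^ 2 * ‖t‖ := by
        gcongr with k _ l
        rw [abs_mul, abs_mul, abs_mul]
        calc |θ k| * (|S k l| * |min (t k) (t l)|) * |θ l|
            ≤ ‖θ‖ * (|S k l| * ‖t‖) * ‖θ‖ := by gcongr <;> simp only [hθ, hmin]
          _ = |S k l| * ‖θ‖ ^ 2 * ‖t‖ := by ring
    _ = (∑ k, ∑ l, |S k l|) * ‖θ‖ ^ 2 * ‖t‖ := by simp only [Finset.sum_mul]

lemma norm_exp_sub_one_le_two_mul_min {z : ℂ} (hz : z.re ≤ 0) :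
    ‖exp z - 1‖ ≤ 2 * min ‖z‖ 1 := by
  rcases le_total ‖z‖ 1 with h | h
  · rw [min_eq_left h]
    exact norm_exp_sub_one_le h
  · rw [min_eq_right h]
    calc ‖exp z - 1‖ ≤ ‖exp z‖ + ‖(1 : ℂ)‖ := norm_sub_le _ _
      _ ≤ 2 * 1 := by
        rw [norm_exp, norm_one]
        linarith [Real.exp_le_one_iff.2 hz]

lemma min_mul_le_add_one_mul_min {a c : ℝ} (ha : 0 ≤ a) (hc : 0 ≤ c) :
    min (c * a) 1 ≤ (c + 1) * min a 1 := by
  rcases le_total a 1 with h | h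
  · rw [min_eq_left h]
    nlinarith [min_le_left (c * a) 1]
  · rw [min_eq_right h]
    linarith [min_le_right (c * a) 1]

def levyIntegrand {n : ℕ} (μ : Fin n → ℝ) (S : Matrix (Fin n) (Fin n) ℝ) (θ t : Fin n → ℝ) : ℂ :=
  exp (I * (dot θ (diaV t μ) : ℂ) - (quad (diaM t S) θ : ℂ) / 2) - 1

lemma re_levyIntegrand {n : ℕ} (μ : Fin n → ℝ) (S : Matrix (Fin n) (Fin n) ℝ) (θ t : Fin n → ℝ) :
    (levyIntegrand μ S θ t).re =
      Real.exp (-(quad (diaM t S) θ) / 2) * Real.cos (dot θ (diaV t μ)) - 1 := by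
  simp [levyIntegrand, exp_re, neg_div]

lemma continuous_levyIntegrand {n : ℕ} (μ : Fin n → ℝ) (S : Matrix (Fin n) (Fin n) ℝ) :
    Continuous fun p : (Fin n → ℝ) × (Fin n → ℝ) => levyIntegrand μ S p.1 p.2 := by
  simp only [levyIntegrand, dot, diaV, quad, diaM, Matrix.of_apply]
  fun_prop

lemma exists_norm_levyIntegrand_le {n : ℕ} (μ : Fin n → ℝ) {S : Matrix (Fin n) (Fin n) ℝ}
    (hS : S.PosSemidef) {r : ℝ} (hr : 0 ≤ r) : ∃ C, ∀ θ t : Fin n → ℝ, ‖θ‖ ≤ r →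
      (∀ k, 0 ≤ t k) → ‖levyIntegrand μ S θ t‖ ≤ C * min ‖t‖ 1 := by
  set K := (∑ k, |μ k|) * r + (∑ k, ∑ l, |S k l|) * r ^ 2 / 2 with hK_def
  have hK : 0 ≤ K := by positivity
  refine ⟨2 * (K + 1), fun θ t hθ ht => ?_⟩
  set z : ℂ := I * (dot θ (diaV t μ) : ℂ) - (quad (diaM t S) θ : ℂ) / 2
  have hq : 0 ≤ quad (diaM t S) θ := quad_diaM_nonneg hS ht θ
  have hre : z.re ≤ 0 := by
    simp only [z, sub_re, mul_re, I_re, ofReal_re, zero_mul, I_im, ofReal_im, mul_zero, sub_self,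
      div_ofNat_re, zero_sub, Left.neg_nonpos_iff]
    positivity
  have hz : ‖z‖ ≤ K * ‖t‖ := by
    calc ‖z‖ ≤ |dot θ (diaV t μ)| + |quad (diaM t S) θ| / 2 := by
          refine (norm_sub_le _ _).trans_eq ?_
          simp
      _ ≤ (∑ k, |μ k|) * ‖θ‖ * ‖t‖ + (∑ k, ∑ l, |S k l|) * ‖θ‖ ^ 2 * ‖t‖ / 2 := by
          gcongr
          · exact abs_dot_diaV_le θ t μ
          · exact abs_quad_diaM_le θ t S
      _ = ((∑ k, |μ k|) * ‖θ‖ + (∑ k, ∑ l, |S k l|) * ‖θ‖ ^ 2 / 2) * ‖t‖ := by ring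
      _ ≤ K * ‖t‖ := by rw [hK_def]; gcongr
  calc ‖exp z - 1‖ ≤ 2 * min ‖z‖ 1 := norm_exp_sub_one_le_two_mul_min hre
    _ ≤ 2 * min (K * ‖t‖) 1 := by gcongr
    _ ≤ 2 * (K + 1) * min ‖t‖ 1 := by
        rw [mul_assoc]
        gcongr
        exact min_mul_le_add_one_mul_min (norm_nonneg t) hK

lemma norm_le_sqrt_sum_sq {n : ℕ} (t : Fin n → ℝ) : ‖t‖ ≤ √(∑ k, t k ^ 2) :=
  (pi_norm_le_iff_of_nonneg (Real.sqrt_nonneg _)).2 fun k => by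
    rw [Real.norm_eq_abs, ← Real.sqrt_sq_eq_abs]
    exact Real.sqrt_le_sqrt (Finset.single_le_sum (fun j _ => sq_nonneg (t j)) (Finset.mem_univ k))

lemma integrable_min_norm_one {n : ℕ} {ρ : Measure (Fin n → ℝ)}
    (hmom : ∫⁻ t, ENNReal.ofReal (min √(∑ k, t k ^ 2) 1) ∂ρ < ⊤) :
    Integrable (fun t => min ‖t‖ 1) ρ := by
  refine ⟨(continuous_norm.min continuous_const).aestronglyMeasurable, ?_⟩
  rw [hasFiniteIntegral_iff_ofReal (.of_forall fun t => by positivity)]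
  refine lt_of_le_of_lt (lintegral_mono fun t => ?_) hmom
  gcongr
  exact norm_le_sqrt_sum_sq t

section LevyExponent

variable {n : ℕ} {S : Matrix (Fin n) (Fin n) ℝ} {ρ : Measure (Fin n → ℝ)}

lemma integrable_levyIntegrand (μ : Fin n → ℝ) (hS : S.PosSemidef)
    (hρ : ∀ᵐ t ∂ρ, ∀ k, 0 ≤ t k) (hmin : Integrable (fun t => min ‖t‖ 1) ρ) (θ : Fin n → ℝ) :
    Integrable (levyIntegrand μ S θ) ρ := by
  obtain ⟨C, hC⟩ := exists_norm_levyIntegrand_le μ hS (norm_nonneg θ)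
  exact (hmin.const_mul C).mono'
    ((continuous_levyIntegrand μ S).comp (Continuous.prodMk_right θ)).aestronglyMeasurable
    (hρ.mono fun t ht => hC θ t le_rfl ht)

lemma continuous_Ψws (μ : Fin n → ℝ) (hS : S.PosSemidef)
    (hρ : ∀ᵐ t ∂ρ, ∀ k, 0 ≤ t k) (hmin : Integrable (fun t => min ‖t‖ 1) ρ) :
    Continuous (Ψws μ S ρ) := by
  refine continuous_iff_continuousAt.2 fun θ₀ => ?_
  obtain ⟨C, hC⟩ := exists_norm_levyIntegrand_le μ hS (r := ‖θ₀‖ + 1) (by positivity)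
  refine continuousAt_of_dominated
    (.of_forall fun θ =>
      ((continuous_levyIntegrand μ S).comp (Continuous.prodMk_right θ)).aestronglyMeasurable)
    ?_ (hmin.const_mul C)
    (.of_forall fun t => ((continuous_levyIntegrand μ S).comp
      (Continuous.prodMk_left t)).continuousAt)
  filter_upwards [Metric.closedBall_mem_nhds θ₀ one_pos] with θ hθ
  exact hρ.mono fun t ht => hC θ t (norm_le_of_mem_closedBall hθ) ht

lemma re_Ψws_le_Ψstar (μ : Fin n → ℝ) (hS : S.PosSemidef)
    (hρ : ∀ᵐ t ∂ρ, ∀ k, 0 ≤ t k) (hmin : Integrable (fun t => min ‖t‖ 1) ρ) (θ : Fin n → ℝ) :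
    (Ψws μ S ρ θ).re ≤ Ψstar S ρ θ := by
  have hstar : Ψstar S ρ θ = ∫ t, (levyIntegrand 0 S θ t).re ∂ρ := by
    simp [Ψstar, re_levyIntegrand, dot, diaV]
  have hre : (Ψws μ S ρ θ).re = ∫ t, (levyIntegrand μ S θ t).re ∂ρ :=
    (integral_re (integrable_levyIntegrand μ hS hρ hmin θ)).symm
  rw [hstar, hre]
  refine integral_mono (integrable_levyIntegrand μ hS hρ hmin θ).re
    (integrable_levyIntegrand 0 hS hρ hmin θ).re fun t => ?_
  simp only [re_levyIntegrand]
  gcongr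
  simpa [dot, diaV] using Real.cos_le_one _

end LevyExponent

theorem stmt1_general {n : ℕ} (μ m : Fin n → ℝ)
    (S : Matrix (Fin n) (Fin n) ℝ) (hS : S.PosSemidef)
    (ρ : Measure (Fin n → ℝ))
    (hsupp : ρ {t | ¬ ((∀ k, 0 ≤ t k) ∧ t ≠ 0)} = 0)
    (hmom : ∫⁻ t, ENNReal.ofReal (min (Real.sqrt (∑ k, (t k) ^ 2)) 1) ∂ρ < ⊤)
    (s : ℝ) (hs : 0 ≤ s) (p : ℝ) (hp : 0 < p)
    (hLp : Integrable (fun θ : Fin n → ℝ => Real.exp (s * Ψstar S ρ θ) ^ p)) :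
    Integrable (fun θ : Fin n → ℝ =>
      ‖Complex.exp (Complex.I * ((s * dot θ m : ℝ) : ℂ) +
        (s : ℂ) * Ψws μ S ρ θ)‖ ^ p) := by
  have hρ : ∀ᵐ t ∂ρ, ∀ k, 0 ≤ t k := (ae_iff.2 hsupp).mono fun _ ht => ht.1
  have hmin := integrable_min_norm_one hmom
  have hcont : Continuous fun θ : Fin n → ℝ =>
      Complex.exp (Complex.I * ((s * dot θ m : ℝ) : ℂ) + (s : ℂ) * Ψws μ S ρ θ) := by
    have := continuous_Ψws μ hS hρ hmin
    simp only [dot]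
    fun_prop
  have hnorm : ∀ θ,
      ‖Complex.exp (Complex.I * ((s * dot θ m : ℝ) : ℂ) + (s : ℂ) * Ψws μ S ρ θ)‖ =
        Real.exp (s * (Ψws μ S ρ θ).re) := fun θ => by
    simp [Complex.norm_exp]
  refine hLp.mono' (hcont.norm.rpow_const fun _ => .inr hp.le).aestronglyMeasurable
    (.of_forall fun θ => ?_)
  rw [Real.norm_of_nonneg (by positivity), hnorm]
  gcongr
  exact re_Ψws_le_Ψstar μ hS hρ hmin θ

/-- If the characteristic function of `X*(s) = (B* ⊙ T)(s)` is in `L^p`, then so is the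
characteristic function of `Y(s) = s m + (B ⊙ T)(s)`. -/
theorem stmt1 {n : ℕ} (hn : 1 ≤ n) (μ m : Fin n → ℝ)
    (S : Matrix (Fin n) (Fin n) ℝ) (hS : S.PosSemidef)
    (ρ : Measure (Fin n → ℝ))
    (hsupp : ρ {t | ¬ ((∀ k, 0 ≤ t k) ∧ t ≠ 0)} = 0)
    (hmom : ∫⁻ t, ENNReal.ofReal (min (Real.sqrt (∑ k, (t k) ^ 2)) 1) ∂ρ < ⊤)
    (s : ℝ) (hs : 0 ≤ s) (p : ℝ) (hp : 0 < p)
    (hLp : Integrable (fun θ : Fin n → ℝ => Real.exp (s * Ψstar S ρ θ) ^ p)) :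
    Integrable (fun θ : Fin n → ℝ =>
      ‖Complex.exp (Complex.I * ((s * dot θ m : ℝ) : ℂ) +
        (s : ℂ) * Ψws μ S ρ θ)‖ ^ p) :=
  stmt1_general μ m S hS ρ hsupp hmom s hs p hp hLp
end
end

section
/- Let n ≥ 1, b > 0, t > 0, μ ∈ ℝ^n, and let Σ ∈ ℝ^{n×n} be a symmetric positive semidefinite matrix. Then for every θ ∈ ℝ^n, ∫_0^∞ exp(s(i⟨μ,θ⟩ − ½‖θ‖²_Σ)) · (b^{bt}/Γ(bt)) s^{bt−1} e^{−b s} ds = exp(−b t Log(1 − i⟨μ,θ⟩/b + ‖θ‖²_Σ/(2b))), where Γ is the Gamma function and Log is the principal branch of the complex logarithm. -/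
open MeasureTheory Complex

noncomputable section

/-! The Gamma integral `∫₀^∞ s^(a-1) e^(-z s) ds = Γ(a) z^(-a)`, known for real `z > 0`, extends
to `Re z > 0`: both sides are holomorphic on that half-plane (the left one by differentiation under
the integral sign), which is connected. The mixture integrand is `b^a / Γ(a) · s^(a-1) e^(-β s)`
with `a = bt` and `β = b + ‖θ‖²_Σ / 2 - i⟨μ,θ⟩`, where `Re β > 0` because `Σ` is positive
semidefinite; and `b^a β^(-a) = exp(-a Log(β / b))` because dividing by `b > 0` only shifts `Log`
by the real number `log b`. -/

open Set Filter Topology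

lemma norm_cpow_mul_cexp_neg_mul_le {a z : ℂ} {c s : ℝ} (hs : 0 < s) (hc : c ≤ z.re) :
    ‖(s : ℂ) ^ (a - 1) * cexp (-(z * s))‖ ≤ s ^ (a.re - 1) * Real.exp (-(c * s)) := by
  rw [norm_mul, norm_cpow_eq_rpow_re_of_pos hs, norm_exp, sub_re, one_re]
  gcongr
  simpa using mul_le_mul_of_nonneg_right hc hs.le

lemma integrableOn_Ioi_rpow_mul_exp_neg_mul {p c : ℝ} (hp : -1 < p) (hc : 0 < c) :
    IntegrableOn (fun s : ℝ => s ^ p * Real.exp (-(c * s))) (Ioi 0) := by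
  simpa using integrableOn_rpow_mul_exp_neg_mul_rpow hp one_pos hc

lemma aestronglyMeasurable_cpow_mul_cexp_neg_mul (a z : ℂ) :
    AEStronglyMeasurable (fun s : ℝ => (s : ℂ) ^ (a - 1) * cexp (-(z * s)))
      (volume.restrict (Ioi 0)) := by
  refine ContinuousOn.aestronglyMeasurable (fun s hs => ?_) measurableSet_Ioi
  exact ((continuousAt_ofReal_cpow_const s _ (Or.inr (ne_of_gt hs))).mul
    (by fun_prop)).continuousWithinAt

lemma integrableOn_Ioi_cpow_mul_cexp_neg_mul {a z : ℂ} (ha : 0 < a.re) (hz : 0 < z.re) :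
    IntegrableOn (fun s : ℝ => (s : ℂ) ^ (a - 1) * cexp (-(z * s))) (Ioi 0) :=
  (integrableOn_Ioi_rpow_mul_exp_neg_mul (by linarith) hz).mono'
    (aestronglyMeasurable_cpow_mul_cexp_neg_mul a z)
    ((ae_restrict_iff' measurableSet_Ioi).mpr <| .of_forall fun _ hs =>
      norm_cpow_mul_cexp_neg_mul_le hs le_rfl)

lemma differentiableOn_integral_cpow_mul_cexp_neg_mul {a : ℂ} (ha : 0 < a.re) :
    DifferentiableOn ℂ (fun z : ℂ => ∫ s in Ioi (0 : ℝ), (s : ℂ) ^ (a - 1) * cexp (-(z * s)))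
      {z | 0 < z.re} := by
  intro β (hβ : 0 < β.re)
  have hball : ∀ z ∈ Metric.ball β (β.re / 2), β.re / 2 ≤ z.re := by
    intro z hz
    have := (abs_lt.mp ((abs_re_le_norm (z - β)).trans_lt (mem_ball_iff_norm.mp hz))).1
    rw [sub_re] at this
    linarith
  -- The exponent `a + 1 - 1` lets the bounds above for `a + 1` apply to the derivative.
  have hderiv : ∀ s ∈ Ioi (0 : ℝ), ∀ z : ℂ,
      HasDerivAt (fun z : ℂ => (s : ℂ) ^ (a - 1) * cexp (-(z * s)))
        (-((s : ℂ) ^ (a + 1 - 1) * cexp (-(z * s)))) z := by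
    intro s (hs : 0 < s) z
    have hs' : (s : ℂ) ≠ 0 := ofReal_ne_zero.mpr hs.ne'
    have hlin : HasDerivAt (fun z : ℂ => -(z * s)) (-s) z := by
      simpa using ((hasDerivAt_id z).mul_const (s : ℂ)).fun_neg
    refine (hlin.cexp.const_mul ((s : ℂ) ^ (a - 1))).congr_deriv ?_
    rw [add_sub_cancel_right]
    conv_rhs => rw [← sub_add_cancel a 1, cpow_add _ _ hs', cpow_one]
    ring
  refine ((hasDerivAt_integral_of_dominated_loc_of_deriv_le
    (μ := volume.restrict (Ioi 0)) (F := fun z (s : ℝ) => (s : ℂ) ^ (a - 1) * cexp (-(z * s)))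
    (Metric.ball_mem_nhds β (half_pos hβ))
    (.of_forall fun z => aestronglyMeasurable_cpow_mul_cexp_neg_mul a z)
    (integrableOn_Ioi_cpow_mul_cexp_neg_mul ha hβ)
    (aestronglyMeasurable_cpow_mul_cexp_neg_mul (a + 1) β).neg
    ((ae_restrict_iff' measurableSet_Ioi).mpr <| .of_forall fun (s : ℝ) hs z hz => ?_)
    (integrableOn_Ioi_rpow_mul_exp_neg_mul (p := (a + 1).re - 1) (by simp; linarith)
      (half_pos hβ))
    ((ae_restrict_iff' measurableSet_Ioi).mpr <| .of_forall fun (s : ℝ) hs z _ =>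
      hderiv s hs z)).2).differentiableAt.differentiableWithinAt
  rw [norm_neg]
  exact norm_cpow_mul_cexp_neg_mul_le hs (hball z hz)

theorem integral_cpow_mul_exp_neg_mul_Ioi_of_re_pos {a z : ℂ} (ha : 0 < a.re) (hz : 0 < z.re) :
    ∫ s in Ioi (0 : ℝ), (s : ℂ) ^ (a - 1) * cexp (-(z * s)) = Gamma a * z ^ (-a) := by
  set U : Set ℂ := {z | 0 < z.re}
  have hU : IsOpen U := isOpen_lt continuous_const continuous_re
  have hlhs := (differentiableOn_integral_cpow_mul_cexp_neg_mul ha).analyticOnNhd hU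
  have hrhs : AnalyticOnNhd ℂ (fun z : ℂ => Gamma a * z ^ (-a)) U :=
    DifferentiableOn.analyticOnNhd (fun w (hw : 0 < w.re) =>
      ((differentiableAt_id.cpow_const (Or.inl hw)).const_mul _).differentiableWithinAt) hU
  have hreal : ∀ r : ℝ, 0 < r →
      ∫ s in Ioi (0 : ℝ), (s : ℂ) ^ (a - 1) * cexp (-(r * s)) = Gamma a * (r : ℂ) ^ (-a) := by
    intro r hr
    rw [integral_cpow_mul_exp_neg_mul_Ioi ha hr, one_div,
      inv_cpow _ _ (by rw [arg_ofReal_of_nonneg hr.le]; exact Real.pi_ne_zero.symm), ← cpow_neg,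
      mul_comm]
  have hfreq : ∃ᶠ w in 𝓝[≠] (1 : ℂ),
      ∫ s in Ioi (0 : ℝ), (s : ℂ) ^ (a - 1) * cexp (-(w * s)) = Gamma a * w ^ (-a) := by
    have hmap : Tendsto ((↑) : ℝ → ℂ) (𝓝[≠] 1) (𝓝[≠] 1) := by
      simpa using continuous_ofReal.continuousWithinAt.tendsto_nhdsWithin
        (x := (1 : ℝ)) (s := {1}ᶜ) (t := {1}ᶜ) (fun x hx => by simpa using hx)
    refine hmap.frequently (Eventually.frequently ?_)
    filter_upwards [eventually_nhdsWithin_of_eventually_nhds (Ioi_mem_nhds one_pos)] with r hr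
    exact hreal r hr
  exact hlhs.eqOn_of_preconnected_of_frequently_eq hrhs (convex_halfSpace_re_gt 0).isPreconnected
    (by simp) hfreq hz

lemma div_ofReal_cpow {β : ℂ} (hβ : β ≠ 0) {r : ℝ} (hr : 0 < r) (c : ℂ) :
    (β / r) ^ c = β ^ c / (r : ℂ) ^ c := by
  have hr' : (r : ℂ) ≠ 0 := ofReal_ne_zero.mpr hr.ne'
  rw [cpow_def_of_ne_zero (div_ne_zero hβ hr'), div_eq_mul_inv β, ← ofReal_inv,
    log_mul_ofReal _ (inv_pos.mpr hr) _ hβ, Real.log_inv, ofReal_neg, ofReal_log hr.le,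
    cpow_def_of_ne_zero hβ, cpow_def_of_ne_zero hr', div_eq_mul_inv, ← exp_neg, ← exp_add]
  ring_nf

lemma Matrix.PosSemidef.quad_nonneg {n : ℕ} {S : Matrix (Fin n) (Fin n) ℝ} (hS : S.PosSemidef)
    (θ : Fin n → ℝ) : 0 ≤ quad S θ := by
  have h : quad S θ = star θ ⬝ᵥ S.mulVec θ := by
    simp [quad, dotProduct, Matrix.mulVec, Finset.mul_sum, mul_assoc]
  exact h ▸ hS.dotProduct_mulVec_nonneg θ

theorem stmt11_general {n : ℕ} (b t : ℝ) (hb : 0 < b) (ht : 0 < t)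
    (μ : Fin n → ℝ) (S : Matrix (Fin n) (Fin n) ℝ) (hS : S.PosSemidef)
    (θ : Fin n → ℝ) :
    ∫ s in Set.Ioi (0 : ℝ),
        Complex.exp ((s : ℂ) * (Complex.I * (dot μ θ : ℂ) - (quad S θ : ℂ) / 2)) *
          ((b ^ (b * t) / Real.Gamma (b * t) * s ^ (b * t - 1) *
            Real.exp (-(b * s)) : ℝ) : ℂ) =
      Complex.exp (-(b : ℂ) * (t : ℂ) * Complex.log (1 - Complex.I * (dot μ θ : ℂ) / (b : ℂ) +
        (quad S θ : ℂ) / (2 * (b : ℂ)))) := by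
  set a := b * t
  have ha : 0 < a := mul_pos hb ht
  set β : ℂ := b + quad S θ / 2 - I * dot μ θ
  have hβ : 0 < β.re := by
    have := hS.quad_nonneg θ
    simp only [β, sub_re, add_re, ofReal_re, div_ofNat_re, mul_re, I_re, I_im, ofReal_im, zero_mul,
      mul_zero, sub_self, sub_zero]
    positivity
  have hβ0 : β ≠ 0 := fun h => by simp [h] at hβ
  have hb' : (b : ℂ) ≠ 0 := ofReal_ne_zero.mpr hb.ne'
  have hintegrand : ∀ s ∈ Ioi (0 : ℝ),
      cexp (s * (I * dot μ θ - quad S θ / 2)) *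
        ((b ^ a / Real.Gamma a * s ^ (a - 1) * Real.exp (-(b * s)) : ℝ) : ℂ) =
      ((b ^ a / Real.Gamma a : ℝ) : ℂ) * ((s : ℂ) ^ ((a : ℂ) - 1) * cexp (-(β * s))) := by
    intro s (hs : 0 < s)
    rw [ofReal_mul, ofReal_mul, ofReal_cpow hs.le, ofReal_exp, ofReal_sub, ofReal_one,
      mul_comm, mul_assoc, mul_assoc, ← exp_add]
    congr 3
    simp only [β]; push_cast; ring
  have hlog_arg : 1 - I * dot μ θ / b + quad S θ / (2 * b) = β / b := by
    simp only [β]; field_simp; ring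
  rw [setIntegral_congr_fun measurableSet_Ioi hintegrand, integral_const_mul,
    integral_cpow_mul_exp_neg_mul_Ioi_of_re_pos (by simpa) hβ, hlog_arg,
    show -(b : ℂ) * t = -(a : ℂ) by push_cast [a]; ring, mul_comm (-(a : ℂ)),
    ← cpow_def_of_ne_zero (div_ne_zero hβ0 hb'), div_ofReal_cpow hβ0 hb, Gamma_ofReal,
    ofReal_div, ofReal_cpow hb.le, cpow_neg (b : ℂ)]
  have hΓ : (Real.Gamma a : ℂ) ≠ 0 := ofReal_ne_zero.mpr (Real.Gamma_pos_of_pos ha).ne'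
  field_simp

/-- Mixing the Gaussian characteristic function `exp(s(i⟨μ,θ⟩ - ½‖θ‖²_Σ))` against the
Gamma(bt, b) density yields the variance-gamma characteristic function
`exp(-bt Log(1 - i⟨μ,θ⟩/b + ‖θ‖²_Σ/(2b)))`. -/
theorem stmt11 {n : ℕ} (hn : 1 ≤ n) (b t : ℝ) (hb : 0 < b) (ht : 0 < t)
    (μ : Fin n → ℝ) (S : Matrix (Fin n) (Fin n) ℝ) (hS : S.PosSemidef)
    (θ : Fin n → ℝ) :
    ∫ s in Set.Ioi (0 : ℝ),
        Complex.exp ((s : ℂ) * (Complex.I * (dot μ θ : ℂ) - (quad S θ : ℂ) / 2)) *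
          ((b ^ (b * t) / Real.Gamma (b * t) * s ^ (b * t - 1) *
            Real.exp (-(b * s)) : ℝ) : ℂ) =
      Complex.exp (-(b : ℂ) * (t : ℂ) * Complex.log (1 - Complex.I * (dot μ θ : ℂ) / (b : ℂ) +
        (quad S θ : ℂ) / (2 * (b : ℂ)))) :=
  stmt11_general b t hb ht μ S hS θ
end
end
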